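/- Suppose a degree-zero right connection ∇→ satisfies the undeformed †-bimodule condition ∇→(ω) = −σ∘†₂∘∇→(ω*) for all homogeneous ω (with σ the flip and †₂(ρ⊗η)=η*⊗ρ*). Then the deformed connection ∇→_θ = T_θ∘∇→ satisfies the deformed condition ∇→_θ(ω) = −σ_θ ∘ †_{1⊗_θ1} ∘ ∇→_θ(ω†) for all homogeneous ω, where σ_θ = T_θ∘σ∘T_θ^{−1} and ω† = λ^{n₁(ω)n₂(ω)}ω*. -/

import Mathlib

/-!
Write `∇→(ω*) = ∑ᵢ αᵢ ⊗ βᵢ` with `deg αᵢ + deg βᵢ = -deg ω`. On each summand the phases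
produced by `T_θ`, by the deformed dagger and by the twist `λ^{n₁n₂}` of `ω†` cancel, so that
`†_{1⊗_θ1} ∘ T_θ` applied to `λ^{n₁n₂} ∇→(ω*)` is `T_θ ∘ †₂` applied to `∇→(ω*)`. Since
`σ_θ ∘ T_θ = T_θ ∘ σ`, the deformed condition is `T_θ` applied to the undeformed one.
-/

open Finset ComplexConjugate

theorem Complex.conj_zpow_of_norm_eq_one {z : ℂ} (hz : ‖z‖ = 1) (k : ℤ) :
    conj (z ^ k) = z ^ (-k) := by
  rw [map_zpow₀, ← Complex.inv_eq_conj hz, inv_zpow, zpow_neg]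

theorem dagger_smul_twist_tmul {Ω T Tθ : Type*} [AddCommGroup Tθ] [Module ℂ Tθ]
    {l : ℂ} (hl : ‖l‖ = 1) {Gr : ℤ × ℤ → Set Ω} {star : Ω → Ω}
    (hstar : ∀ n, ∀ ω ∈ Gr n, star ω ∈ Gr (-n)) {t : Ω → Ω → T} {tθ : Ω → Ω → Tθ}
    (Tmap : T → Tθ)
    (hTmap_t : ∀ (m n : ℤ × ℤ) (ω η : Ω), ω ∈ Gr m → η ∈ Gr n →
      Tmap (t ω η) = l ^ (-(m.2 * n.1)) • tθ ω η)
    (dag : Tθ →ₗ⋆[ℂ] Tθ)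
    (hdag_t : ∀ (m n : ℤ × ℤ) (ω η : Ω), ω ∈ Gr m → η ∈ Gr n →
      dag (tθ ω η) = l ^ (n.1 * n.2) • l ^ (m.1 * m.2) • tθ (star η) (star ω))
    {n d e : ℤ × ℤ} (hde : d + e = -n) {α β : Ω} (hα : α ∈ Gr d) (hβ : β ∈ Gr e) :
    dag (l ^ (n.1 * n.2) • Tmap (t α β)) = Tmap (t (star β) (star α)) := by
  have hl0 : l ≠ 0 := by rintro rfl; simp at hl
  obtain rfl : n = -(d + e) := by rw [hde, neg_neg]
  rw [hTmap_t d e α β hα hβ, hTmap_t (-e) (-d) _ _ (hstar e β hβ) (hstar d α hα),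
    map_smulₛₗ, map_smulₛₗ, hdag_t d e α β hα hβ]
  simp only [Complex.conj_zpow_of_norm_eq_one hl, smul_smul, ← zpow_add₀ hl0]
  congr 2
  -- `-(d₁+e₁)(d₂+e₂) + d₂e₁ + e₁e₂ + d₁d₂ = -d₁e₂`
  simp only [Prod.fst_neg, Prod.snd_neg, Prod.fst_add, Prod.snd_add]
  ring

theorem dagger_smul_twist_sum {Ω T Tθ : Type*} [AddCommGroup T] [Module ℂ T]
    [AddCommGroup Tθ] [Module ℂ Tθ]
    {l : ℂ} (hl : ‖l‖ = 1) {Gr : ℤ × ℤ → Set Ω} {star : Ω → Ω}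
    (hstar : ∀ n, ∀ ω ∈ Gr n, star ω ∈ Gr (-n)) {t : Ω → Ω → T} {tθ : Ω → Ω → Tθ}
    (Tmap : T →ₗ[ℂ] Tθ)
    (hTmap_t : ∀ (m n : ℤ × ℤ) (ω η : Ω), ω ∈ Gr m → η ∈ Gr n →
      Tmap (t ω η) = l ^ (-(m.2 * n.1)) • tθ ω η)
    (dag : Tθ →ₗ⋆[ℂ] Tθ)
    (hdag_t : ∀ (m n : ℤ × ℤ) (ω η : Ω), ω ∈ Gr m → η ∈ Gr n →
      dag (tθ ω η) = l ^ (n.1 * n.2) • l ^ (m.1 * m.2) • tθ (star η) (star ω))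
    (dag₂ : T →+ T) (hdag₂_t : ∀ ω η : Ω, dag₂ (t ω η) = t (star η) (star ω))
    {ι : Type*} (s : Finset ι) {n : ℤ × ℤ} {α β : ι → Ω} {d e : ι → ℤ × ℤ}
    (hα : ∀ i, α i ∈ Gr (d i)) (hβ : ∀ i, β i ∈ Gr (e i)) (hde : ∀ i, d i + e i = -n) :
    dag (Tmap (l ^ (n.1 * n.2) • ∑ i ∈ s, t (α i) (β i))) =
      Tmap (dag₂ (∑ i ∈ s, t (α i) (β i))) := by
  simp only [map_sum, map_smul, smul_sum, hdag₂_t]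
  exact sum_congr rfl fun i _ =>
    dagger_smul_twist_tmul hl hstar Tmap hTmap_t dag hdag_t (hde i) (hα i) (hβ i)

theorem stmt_18_general {Ω T Tθ : Type*}
    [AddCommGroup Ω] [Module ℂ Ω] [AddCommGroup T] [Module ℂ T] [AddCommGroup Tθ] [Module ℂ Tθ]
    (l : ℂ) (hl : ‖l‖ = 1)
    (Gr : ℤ × ℤ → Submodule ℂ Ω)
    (starΩ : Ω → Ω)
    (hstarGr : ∀ n : ℤ × ℤ, ∀ ω ∈ Gr n, starΩ ω ∈ Gr (-n))
    (t : Ω → Ω → T) (tθ : Ω → Ω → Tθ)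
    (Tmap : T → Tθ)
    (hTmap_add : ∀ v w : T, Tmap (v + w) = Tmap v + Tmap w)
    (hTmap_s : ∀ (c : ℂ) (v : T), Tmap (c • v) = c • Tmap v)
    (hTmap_t : ∀ (m n : ℤ × ℤ) (ω η : Ω), ω ∈ Gr m → η ∈ Gr n →
      Tmap (t ω η) = l ^ (-(m.2 * n.1)) • tθ ω η)
    (σ : T → T)
    (dag2 : T → T)
    (hdag2_add : ∀ v w : T, dag2 (v + w) = dag2 v + dag2 w)
    (hdag2_t : ∀ ω η : Ω, dag2 (t ω η) = t (starΩ η) (starΩ ω))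
    (σθ : Tθ → Tθ)
    (hσθ : ∀ v : T, σθ (Tmap v) = Tmap (σ v))
    (dag1θ : Tθ → Tθ)
    (hdag1θ_add : ∀ v w : Tθ, dag1θ (v + w) = dag1θ v + dag1θ w)
    (hdag1θ_s : ∀ (c : ℂ) (v : Tθ), dag1θ (c • v) = (starRingEnd ℂ) c • dag1θ v)
    (hdag1θ_t : ∀ (m n : ℤ × ℤ) (ω η : Ω), ω ∈ Gr m → η ∈ Gr n →
      dag1θ (tθ ω η) = l ^ (n.1 * n.2) • l ^ (m.1 * m.2) • tθ (starΩ η) (starΩ ω))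
    (covr : Ω → T)
    (hcovr_s : ∀ (c : ℂ) (ω : Ω), covr (c • ω) = c • covr ω)
    (hcovr_hom : ∀ (n : ℤ × ℤ) (ω : Ω), ω ∈ Gr n →
      ∃ (k : ℕ) (α β : Fin k → Ω) (d e : Fin k → ℤ × ℤ),
        (∀ i, α i ∈ Gr (d i)) ∧ (∀ i, β i ∈ Gr (e i)) ∧ (∀ i, d i + e i = n) ∧
        covr ω = ∑ i, t (α i) (β i))
    (hbimod : ∀ (n : ℤ × ℤ) (ω : Ω), ω ∈ Gr n → covr ω = - σ (dag2 (covr (starΩ ω)))) :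
    ∀ (n : ℤ × ℤ) (ω : Ω), ω ∈ Gr n →
      Tmap (covr ω) = - σθ (dag1θ (Tmap (covr (l ^ (n.1 * n.2) • starΩ ω)))) := by
  intro n ω hω
  let Tlin : T →ₗ[ℂ] Tθ := ⟨⟨Tmap, hTmap_add⟩, hTmap_s⟩
  obtain ⟨k, α, β, d, e, hα, hβ, hde, hsum⟩ := hcovr_hom (-n) (starΩ ω) (hstarGr n ω hω)
  have hdag : dag1θ (Tmap (covr (l ^ (n.1 * n.2) • starΩ ω))) =
      Tmap (dag2 (covr (starΩ ω))) := by
    rw [hcovr_s, hsum]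
    exact dagger_smul_twist_sum hl (Gr := fun n => Gr n) hstarGr Tlin hTmap_t
      ⟨⟨dag1θ, hdag1θ_add⟩, hdag1θ_s⟩ hdag1θ_t (AddMonoidHom.mk' dag2 hdag2_add) hdag2_t
      univ hα hβ hde
  rw [hdag, hσθ, hbimod n ω hω]
  exact Tlin.map_neg _

/-- Suppose a degree-zero right connection `∇→` satisfies the undeformed
†-bimodule condition `∇→(ω) = −σ(†₂(∇→(ω*)))` on homogeneous `ω`, where `σ` is the flip
and `†₂(ρ⊗η) = η*⊗ρ*`. Then the deformed connection `∇→_θ = T_θ∘∇→` satisfies the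
deformed condition `∇→_θ(ω) = −σ_θ(†_{1⊗_θ1}(∇→_θ(ω†)))` with `σ_θ = T_θ∘σ∘T_θ⁻¹` and
`ω† = λ^{n₁(ω)n₂(ω)}ω*`. -/
theorem stmt_18 {Ω T Tθ : Type*}
    [AddCommGroup Ω] [Module ℂ Ω] [AddCommGroup T] [Module ℂ T] [AddCommGroup Tθ] [Module ℂ Tθ]
    (l : ℂ) (hl : ‖l‖ = 1)
    (Gr : ℤ × ℤ → Submodule ℂ Ω)
    (starΩ : Ω → Ω)
    (hstarGr : ∀ n : ℤ × ℤ, ∀ ω ∈ Gr n, starΩ ω ∈ Gr (-n))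
    (t : Ω → Ω → T) (tθ : Ω → Ω → Tθ)
    (Tmap : T → Tθ)
    (hTmap_add : ∀ v w : T, Tmap (v + w) = Tmap v + Tmap w)
    (hTmap_s : ∀ (c : ℂ) (v : T), Tmap (c • v) = c • Tmap v)
    (hTmap_t : ∀ (m n : ℤ × ℤ) (ω η : Ω), ω ∈ Gr m → η ∈ Gr n →
      Tmap (t ω η) = l ^ (-(m.2 * n.1)) • tθ ω η)
    (σ : T → T)
    (hσ_add : ∀ v w : T, σ (v + w) = σ v + σ w)
    (hσ_t : ∀ ω η : Ω, σ (t ω η) = t η ω)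
    (dag2 : T → T)
    (hdag2_add : ∀ v w : T, dag2 (v + w) = dag2 v + dag2 w)
    (hdag2_t : ∀ ω η : Ω, dag2 (t ω η) = t (starΩ η) (starΩ ω))
    (σθ : Tθ → Tθ)
    (hσθ : ∀ v : T, σθ (Tmap v) = Tmap (σ v))
    (dag1θ : Tθ → Tθ)
    (hdag1θ_add : ∀ v w : Tθ, dag1θ (v + w) = dag1θ v + dag1θ w)
    (hdag1θ_s : ∀ (c : ℂ) (v : Tθ), dag1θ (c • v) = (starRingEnd ℂ) c • dag1θ v)
    (hdag1θ_t : ∀ (m n : ℤ × ℤ) (ω η : Ω), ω ∈ Gr m → η ∈ Gr n →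
      dag1θ (tθ ω η) = l ^ (n.1 * n.2) • l ^ (m.1 * m.2) • tθ (starΩ η) (starΩ ω))
    (covr : Ω → T)
    (hcovr_s : ∀ (c : ℂ) (ω : Ω), covr (c • ω) = c • covr ω)
    (hcovr_hom : ∀ (n : ℤ × ℤ) (ω : Ω), ω ∈ Gr n →
      ∃ (k : ℕ) (α β : Fin k → Ω) (d e : Fin k → ℤ × ℤ),
        (∀ i, α i ∈ Gr (d i)) ∧ (∀ i, β i ∈ Gr (e i)) ∧ (∀ i, d i + e i = n) ∧
        covr ω = ∑ i, t (α i) (β i))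
    (hbimod : ∀ (n : ℤ × ℤ) (ω : Ω), ω ∈ Gr n → covr ω = - σ (dag2 (covr (starΩ ω)))) :
    ∀ (n : ℤ × ℤ) (ω : Ω), ω ∈ Gr n →
      Tmap (covr ω) = - σθ (dag1θ (Tmap (covr (l ^ (n.1 * n.2) • starΩ ω)))) :=
  stmt_18_general l hl Gr starΩ hstarGr t tθ Tmap hTmap_add hTmap_s hTmap_t σ dag2 hdag2_add hdag2_t
    σθ hσθ dag1θ hdag1θ_add hdag1θ_s hdag1θ_t covr hcovr_s hcovr_hom hbimod
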